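/- Let α ∈ (0, 1/2], let M₊ and M₋ be surjective isometries of ℝ², and set P₊ = M₊ '' {y : y₁ ≥ 0 and |y₂| ≤ y₁^α} and P₋ = M₋ '' {y : y₁ ≥ 0 and |y₂| ≤ y₁^α}. Let U ⊆ ℝ² satisfy P₊ ⊆ U and P₋ ⊆ Uᶜ. Let Γ = Γ₋ ∪ Γ₀ ∪ Γ₊, where Γ₊ = M₊ '' {y : y₁ ≥ 0 and y₂ = 0}, Γ₋ = M₋ '' {y : y₁ ≥ 0 and y₂ = 0}, and Γ₀ is the line segment joining M₋(0) to M₊(0). Let R ≥ 5 + 2^{1+1/α} be such that ‖M₊(0)‖ ≤ R and ‖M₋(0)‖ ≤ R. Then for every x ∈ ℝ² with ‖x‖ ≥ 2R, one has d(x, ∂U) + d(x, Γ) ≥ 2^{−2−α} ‖x‖^α. -/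

import Mathlib

/-!
If `x` is within `B = 2^(-2-α)‖x‖^α` of a point `p ∈ Γ`, then `p` cannot lie on the segment,
which stays in the ball of radius `R`, so `p = M(t, 0)` lies on the axis of one of the two
horns, with `t ≥ ‖x‖/4`. The horn contains the ball of radius `(t/2)^α` around `(t, 0)`, so
that ball, moved by `M`, lies in the interior of `U` or of `Uᶜ` and misses `∂U`. Hence
`d(x, ∂U) + ‖x - p‖ ≥ (t/2)^α ≥ (‖x‖/8)^α ≥ B`; taking the infimum over `p` gives the claim.
-/

open Metric Set

noncomputable section

local notation "ℝ²" => EuclideanSpace ℝ (Fin 2)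

def horn (α : ℝ) : Set ℝ² := {y | 0 ≤ y 0 ∧ |y 1| ≤ y 0 ^ α}

def hornAxis : Set ℝ² := {y | 0 ≤ y 0 ∧ y 1 = 0}

lemma norm_of_mem_hornAxis {y : ℝ²} (hy : y ∈ hornAxis) : ‖y‖ = y 0 := by
  rw [EuclideanSpace.norm_eq, Fin.sum_univ_two, hy.2, norm_zero, Real.norm_eq_abs, sq_abs,
    zero_pow two_ne_zero, add_zero, Real.sqrt_sq hy.1]

lemma zero_mem_hornAxis : (0 : ℝ²) ∈ hornAxis := by
  simp [hornAxis]

lemma zero_mem_horn {α : ℝ} (hα : 0 < α) : (0 : ℝ²) ∈ horn α := by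
  simp [horn, Real.zero_rpow hα.ne']

lemma ball_subset_horn {α : ℝ} (hα0 : 0 ≤ α) (hα1 : α ≤ 1) {y : ℝ²}
    (hy : y ∈ hornAxis) (h2 : 2 ≤ y 0) : ball y ((y 0 / 2) ^ α) ⊆ horn α := by
  intro w hw
  have hwy := mem_ball.mp hw
  have hr : (y 0 / 2) ^ α ≤ y 0 / 2 := Real.rpow_le_self_of_one_le (by linarith) hα1
  have h0 : |w 0 - y 0| < (y 0 / 2) ^ α := (PiLp.dist_apply_le w y 0).trans_lt hwy
  have h1 : |w 1| < (y 0 / 2) ^ α := by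
    simpa [hy.2] using (PiLp.dist_apply_le w y 1).trans_lt hwy
  have hw0 : y 0 / 2 ≤ w 0 := by linarith [(abs_lt.mp h0).1]
  exact ⟨by linarith, h1.le.trans (Real.rpow_le_rpow (by linarith) hw0 hα0)⟩

lemma le_infDist_add_dist_of_disjoint_ball {X : Type*} [PseudoMetricSpace X] {T : Set X}
    (hT : T.Nonempty) {c : X} {r : ℝ} (h : Disjoint (ball c r) T) (x : X) :
    r ≤ infDist x T + dist x c := by
  have hc : r ≤ infDist c T :=
    (le_infDist hT).2 fun z hz => not_lt.mp fun hzc => h.ne_of_mem (mem_ball'.mpr hzc) hz rfl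
  linarith [infDist_le_infDist_add_dist (x := c) (y := x) (s := T), dist_comm c x]

lemma rpow_le_infDist_add_dist_of_mem_hornAxis {α : ℝ} (hα0 : 0 ≤ α) (hα1 : α ≤ 1)
    {M : ℝ² ≃ᵢ ℝ²} {S T : Set ℝ²}
    (hS : M '' horn α ⊆ S) (hT : T.Nonempty) (hST : Disjoint (interior S) T)
    {y : ℝ²} (hy : y ∈ hornAxis) (h2 : 2 ≤ y 0) (x : ℝ²) :
    (y 0 / 2) ^ α ≤ infDist x T + dist x (M y) := by
  have hball : ball (M y) ((y 0 / 2) ^ α) ⊆ S := by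
    rw [← M.image_ball]
    exact (image_mono (ball_subset_horn hα0 hα1 hy h2)).trans hS
  exact le_infDist_add_dist_of_disjoint_ball hT
    (hST.mono_left (interior_maximal hball isOpen_ball)) x

lemma two_rpow_neg_two_sub_mul_rpow_le {α : ℝ} (hα1 : α ≤ 1) {s : ℝ} (hs : 0 ≤ s) :
    2 ^ (-2 - α) * s ^ α ≤ (s / 8) ^ α := by
  have h8 : (8 : ℝ) ^ α = 2 ^ (3 * α) := by
    rw [Real.rpow_mul zero_le_two]; norm_num
  rw [Real.div_rpow hs (by norm_num), h8, div_eq_mul_inv, mul_comm, ← Real.rpow_neg zero_le_two]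
  gcongr
  · exact one_le_two
  · linarith

lemma two_rpow_neg_two_sub_mul_rpow_le_infDist_add_dist {α : ℝ} (hα0 : 0 ≤ α) (hα1 : α ≤ 1)
    {M : ℝ² ≃ᵢ ℝ²} {S T : Set ℝ²}
    (hS : M '' horn α ⊆ S) (hT : T.Nonempty) (hST : Disjoint (interior S) T)
    {x p : ℝ²} (hp : p ∈ M '' hornAxis) (hx : 8 ≤ ‖x‖)
    (hM : ‖M 0‖ ≤ ‖x‖ / 2) (hpx : dist x p ≤ ‖x‖ / 4) :
    2 ^ (-2 - α) * ‖x‖ ^ α ≤ infDist x T + dist x p := by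
  obtain ⟨y, hy, rfl⟩ := hp
  have hyM : dist (M y) (M 0) = y 0 := by
    rw [M.dist_eq, dist_zero_right, norm_of_mem_hornAxis hy]
  have hxM : ‖x‖ - ‖M 0‖ ≤ dist x (M 0) := by
    simpa [dist_eq_norm] using norm_sub_norm_le x (M 0)
  have hy0 : ‖x‖ / 4 ≤ y 0 := by linarith [dist_triangle x (M y) (M 0)]
  calc 2 ^ (-2 - α) * ‖x‖ ^ α ≤ (‖x‖ / 8) ^ α :=
        two_rpow_neg_two_sub_mul_rpow_le hα1 (norm_nonneg x)
    _ ≤ (y 0 / 2) ^ α := Real.rpow_le_rpow (by positivity) (by linarith) hα0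
    _ ≤ infDist x T + dist x (M y) :=
      rpow_le_infDist_add_dist_of_mem_hornAxis hα0 hα1 hS hT hST hy (by linarith) x

theorem transversality_estimate (α : ℝ) (hα : 0 < α) (hα' : α ≤ 1 / 2)
    (Mp Mm : EuclideanSpace ℝ (Fin 2) ≃ᵢ EuclideanSpace ℝ (Fin 2))
    (U : Set (EuclideanSpace ℝ (Fin 2)))
    (hPp : Mp '' {y : EuclideanSpace ℝ (Fin 2) | 0 ≤ y 0 ∧ |y 1| ≤ (y 0) ^ α} ⊆ U)
    (hPm : Mm '' {y : EuclideanSpace ℝ (Fin 2) | 0 ≤ y 0 ∧ |y 1| ≤ (y 0) ^ α} ⊆ Uᶜ)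
    (Γ : Set (EuclideanSpace ℝ (Fin 2)))
    (hΓ : Γ = Mm '' {y : EuclideanSpace ℝ (Fin 2) | 0 ≤ y 0 ∧ y 1 = 0}
            ∪ segment ℝ (Mm 0) (Mp 0)
            ∪ Mp '' {y : EuclideanSpace ℝ (Fin 2) | 0 ≤ y 0 ∧ y 1 = 0})
    (R : ℝ) (hR : 5 + 2 ^ (1 + 1 / α) ≤ R)
    (hRp : ‖Mp 0‖ ≤ R) (hRm : ‖Mm 0‖ ≤ R)
    (x : EuclideanSpace ℝ (Fin 2)) (hx : 2 * R ≤ ‖x‖) :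
    2 ^ (-2 - α) * ‖x‖ ^ α ≤ infDist x (frontier U) + infDist x Γ := by
  have hα1 : α ≤ 1 := by linarith
  have hx8 : 8 ≤ ‖x‖ := by linarith [Real.rpow_nonneg zero_le_two (1 + 1 / α)]
  have hΓ_ne : Γ.Nonempty := ⟨Mp 0, hΓ ▸ Or.inr (mem_image_of_mem Mp zero_mem_hornAxis)⟩
  have hfr_ne : (frontier U).Nonempty := nonempty_frontier_iff.2
    ⟨⟨_, hPp (mem_image_of_mem Mp (zero_mem_horn hα))⟩,
      fun hU => hPm (mem_image_of_mem Mm (zero_mem_horn hα)) (hU ▸ mem_univ _)⟩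
  rw [← sub_le_iff_le_add', le_infDist hΓ_ne]
  intro p hp
  rw [sub_le_iff_le_add']
  have hB : 2 ^ (-2 - α) * ‖x‖ ^ α ≤ ‖x‖ / 8 :=
    (two_rpow_neg_two_sub_mul_rpow_le hα1 (norm_nonneg x)).trans
      (Real.rpow_le_self_of_one_le (by linarith) hα1)
  by_cases hpx : 2 ^ (-2 - α) * ‖x‖ ^ α ≤ dist x p
  · linarith [infDist_nonneg (x := x) (s := frontier U)]
  replace hpx : dist x p ≤ ‖x‖ / 4 := by linarith
  rw [hΓ] at hp
  rcases hp with (hp | hp) | hp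
  · exact two_rpow_neg_two_sub_mul_rpow_le_infDist_add_dist hα.le hα1 hPm hfr_ne
      (frontier_compl U ▸ disjoint_interior_frontier) hp hx8 (by linarith) hpx
  · have hpR : ‖p‖ ≤ R := mem_closedBall_zero_iff.1 <|
      (convex_closedBall 0 R).segment_subset (mem_closedBall_zero_iff.2 hRm)
        (mem_closedBall_zero_iff.2 hRp) hp
    linarith [norm_sub_norm_le x p, dist_eq_norm x p]
  · exact two_rpow_neg_two_sub_mul_rpow_le_infDist_add_dist hα.le hα1 hPp hfr_ne
      disjoint_interior_frontier hp hx8 (by linarith) hpx
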